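/- Let G = GL_d(ℂ), let S ⊂ G be a compact set, and define the joint spectral radius R(S) = lim_n sup_{g∈Sⁿ}‖g‖^{1/n} and the joint spectrum J(S) as the Hausdorff limit of (1/n)κ(Sⁿ) (assumed to exist). Then log R(S) = max{x₁ : (x₁,…,x_d) ∈ J(S)} and log R_sub(S) = min{x₁ : (x₁,…,x_d) ∈ J(S)}, where R_sub(S) = lim_n min_{g∈Sⁿ}‖g‖^{1/n}. -/

import Mathlib

open Matrix Pointwise

/-- Logarithms of moduli of complex eigenvalues, sorted in decreasing order. -/
noncomputable def lambdaVec {d : ℕ} (g : Matrix (Fin d) (Fin d) ℂ) : Fin d → ℝ :=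
  fun i => ((g.charpoly.roots.map (fun z => Real.log ‖z‖)).sort (· ≤ ·)).reverse.getD i 0

/-- The Cartan projection `κ(g)`: logarithms of singular values in decreasing order,
as a point of Euclidean space `ℝ^d`. -/
noncomputable def kappaE {d : ℕ} (g : Matrix (Fin d) (Fin d) ℂ) : EuclideanSpace ℝ (Fin d) :=
  (WithLp.equiv 2 (Fin d → ℝ)).symm (fun i => (1 / 2 : ℝ) * lambdaVec (gᴴ * g) i)

/-- The operator (Euclidean) norm of a complex matrix. -/
noncomputable def opNormC {d : ℕ} (g : Matrix (Fin d) (Fin d) ℂ) : ℝ :=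
  ‖Matrix.toEuclideanCLM (𝕜 := ℂ) g‖

/-- The first coordinate `x₁` of a point of the Weyl chamber of `GL_d(ℂ)`. -/
noncomputable def firstCoord {d : ℕ} [NeZero d] (x : EuclideanSpace ℝ (Fin d)) : ℝ :=
  (WithLp.equiv 2 (Fin d → ℝ)) x 0

/-!
The first Cartan coordinate is `κ₁(g) = log ‖g‖`: it is half the largest log-modulus of an
eigenvalue of `gᴴ g`, and the spectral radius of the self-adjoint `gᴴ g` is `‖gᴴ g‖ = ‖g‖²`.
Hence `x₁` maps `κ(Sⁿ)/n` onto `log {‖g‖^{1/n} : g ∈ Sⁿ}`. As `x₁` is 1-Lipschitz, its supremum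
and infimum over a set move by at most the Hausdorff distance (finite here, since `κ` is bounded
on compact subsets of `GL_d(ℂ)`), so they converge to the maximum and minimum of `x₁` on `J(S)`;
exponentiating identifies the limits with `R(S)` and `R_sub(S)`.
-/

open Filter Topology Metric Bornology
open scoped Matrix.Norms.L2Operator

lemma IsCompact.pow {M : Type*} [Monoid M] [TopologicalSpace M] [ContinuousMul M] {s : Set M}
    (hs : IsCompact s) (n : ℕ) : IsCompact (s ^ n) := by
  induction n with
  | zero => simpa only [pow_zero, ← Set.singleton_one] using isCompact_singleton
  | succ n ih => simpa only [pow_succ] using ih.mul hs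

lemma Real.csSup_image_exp {T : Set ℝ} (hT : T.Nonempty) (hT' : BddAbove T) :
    sSup (Real.exp '' T) = Real.exp (sSup T) :=
  (Real.exp_monotone.map_csSup_of_continuousAt Real.continuous_exp.continuousAt hT hT').symm

lemma Real.csInf_image_exp {T : Set ℝ} (hT : T.Nonempty) (hT' : BddBelow T) :
    sInf (Real.exp '' T) = Real.exp (sInf T) :=
  (Real.exp_monotone.map_csInf_of_continuousAt Real.continuous_exp.continuousAt hT hT').symm

section Hausdorff

variable {E : Type*} [PseudoMetricSpace E] {f : E → ℝ} {A B : Set E}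

lemma csSup_image_le_csSup_image_add_hausdorffDist (hf : LipschitzWith 1 f) (hA : A.Nonempty)
    (hB : BddAbove (f '' B)) (hAB : hausdorffEDist A B ≠ ⊤) :
    sSup (f '' A) ≤ sSup (f '' B) + hausdorffDist A B := by
  refine csSup_le (hA.image f) ?_
  rintro _ ⟨a, ha, rfl⟩
  refine le_of_forall_pos_le_add fun ε hε => ?_
  obtain ⟨b, hb, hab⟩ := exists_dist_lt_of_hausdorffDist_lt ha (lt_add_of_pos_right _ hε) hAB
  have hfab : f a - f b ≤ dist a b := by
    simpa using (le_abs_self _).trans ((Real.dist_eq _ _).symm.trans_le (hf.dist_le_mul a b))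
  linarith [le_csSup hB (Set.mem_image_of_mem f hb)]

lemma abs_csSup_image_sub_csSup_image_le_hausdorffDist (hf : LipschitzWith 1 f)
    (hA : A.Nonempty) (hB : B.Nonempty) (hA' : IsBounded A) (hB' : IsBounded B) :
    |sSup (f '' A) - sSup (f '' B)| ≤ hausdorffDist A B := by
  have hAB := hausdorffEDist_ne_top_of_nonempty_of_bounded hA hB hA' hB'
  have h₁ := csSup_image_le_csSup_image_add_hausdorffDist hf hA
    (hf.isBounded_image hB').bddAbove hAB
  have h₂ := csSup_image_le_csSup_image_add_hausdorffDist hf hB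
    (hf.isBounded_image hA').bddAbove (hausdorffEDist_comm.trans_ne hAB)
  rw [hausdorffDist_comm] at h₂
  exact abs_sub_le_iff.mpr ⟨by linarith, by linarith⟩

lemma tendsto_csSup_image_of_tendsto_hausdorffDist {ι : Type*} {l : Filter ι} {A : ι → Set E}
    (hf : LipschitzWith 1 f) (hA : ∀ i, (A i).Nonempty) (hA' : ∀ i, IsBounded (A i))
    (hB : B.Nonempty) (hB' : IsBounded B)
    (h : Tendsto (fun i => hausdorffDist (A i) B) l (𝓝 0)) :
    Tendsto (fun i => sSup (f '' A i)) l (𝓝 (sSup (f '' B))) :=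
  tendsto_iff_dist_tendsto_zero.mpr <| squeeze_zero (fun _ => dist_nonneg)
    (fun i => (Real.dist_eq _ _).trans_le
      (abs_csSup_image_sub_csSup_image_le_hausdorffDist hf (hA i) hB (hA' i) hB')) h

lemma tendsto_csInf_image_of_tendsto_hausdorffDist {ι : Type*} {l : Filter ι} {A : ι → Set E}
    (hf : LipschitzWith 1 f) (hA : ∀ i, (A i).Nonempty) (hA' : ∀ i, IsBounded (A i))
    (hB : B.Nonempty) (hB' : IsBounded B)
    (h : Tendsto (fun i => hausdorffDist (A i) B) l (𝓝 0)) :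
    Tendsto (fun i => sInf (f '' A i)) l (𝓝 (sInf (f '' B))) := by
  have hneg : ∀ C : Set E, sInf (f '' C) = -sSup ((-f) '' C) := fun C => by
    rw [Pi.neg_def, ← Set.image_image Neg.neg f, Set.image_neg_eq_neg, Real.sSup_neg, neg_neg]
  simp only [hneg]
  exact (tendsto_csSup_image_of_tendsto_hausdorffDist hf.neg hA hA' hB hB' h).neg

end Hausdorff

lemma le_getD_zero_reverse_sort {α : Type*} [LinearOrder α] {s : Multiset α} {x : α}
    (hx : x ∈ s) (a : α) : x ≤ (s.sort (· ≤ ·)).reverse.getD 0 a := by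
  have hsorted : (s.sort (· ≤ ·)).reverse.Pairwise (· ≥ ·) :=
    List.pairwise_reverse.mpr (Multiset.pairwise_sort s _)
  have hmem : x ∈ (s.sort (· ≤ ·)).reverse := by simpa using hx
  generalize (s.sort (· ≤ ·)).reverse = l at hsorted hmem
  cases l with
  | nil => simp at hmem
  | cons b l =>
    rcases List.mem_cons.mp hmem with rfl | hmem
    · exact le_rfl
    · exact (List.pairwise_cons.mp hsorted).1 x hmem

section Cartan

variable {d : ℕ}

lemma exists_mem_roots_lambdaVec_eq (A : Matrix (Fin d) (Fin d) ℂ) (i : Fin d) :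
    ∃ z ∈ A.charpoly.roots, lambdaVec A i = Real.log ‖z‖ := by
  have hlen :
      (i : ℕ) < ((A.charpoly.roots.map fun z => Real.log ‖z‖).sort (· ≤ ·)).reverse.length := by
    simp [IsAlgClosed.card_roots_eq_natDegree, Matrix.charpoly_natDegree_eq_dim]
  have hmem := List.getElem_mem hlen
  rw [← List.getD_eq_getElem _ 0 hlen, List.mem_reverse, Multiset.mem_sort,
    Multiset.mem_map] at hmem
  obtain ⟨z, hz, hzi⟩ := hmem
  exact ⟨z, hz, hzi.symm⟩

lemma log_norm_le_lambdaVec_zero [NeZero d] (A : Matrix (Fin d) (Fin d) ℂ) {z : ℂ}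
    (hz : z ∈ A.charpoly.roots) : Real.log ‖z‖ ≤ lambdaVec A 0 :=
  le_getD_zero_reverse_sort (Multiset.mem_map_of_mem (fun z : ℂ => Real.log ‖z‖) hz) 0

lemma mem_spectrum_of_mem_roots_charpoly {A : Matrix (Fin d) (Fin d) ℂ} {z : ℂ}
    (hz : z ∈ A.charpoly.roots) : z ∈ spectrum ℂ A :=
  Matrix.mem_spectrum_iff_isRoot_charpoly.mpr (Polynomial.isRoot_of_mem_roots hz)

lemma lambdaVec_zero_eq_log_norm [NeZero d] {A : Matrix (Fin d) (Fin d) ℂ}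
    (hA : IsSelfAdjoint A) (hA' : IsUnit A) : lambdaVec A 0 = Real.log ‖A‖ := by
  refine le_antisymm ?_ ?_
  · obtain ⟨z, hz, hzA⟩ := exists_mem_roots_lambdaVec_eq A 0
    have hσ := mem_spectrum_of_mem_roots_charpoly hz
    -- for `z = 0` the junk value `Real.log ‖z‖ = 0` could exceed `Real.log ‖A‖`
    have hz0 : z ≠ 0 := fun h => spectrum.zero_notMem ℂ hA' (h ▸ hσ)
    rw [hzA]
    exact Real.log_le_log (norm_pos_iff.mpr hz0) (spectrum.norm_le_norm_of_mem hσ)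
  · obtain ⟨z, hσ, hzA⟩ := spectrum.exists_nnnorm_eq_spectralRadius A
    rw [hA.spectralRadius_eq_nnnorm, ENNReal.coe_inj] at hzA
    have hz : z ∈ A.charpoly.roots := by
      rw [Polynomial.mem_roots (Matrix.charpoly_monic A).ne_zero]
      exact Matrix.mem_spectrum_iff_isRoot_charpoly.mp hσ
    rw [← show ‖z‖ = ‖A‖ from congrArg NNReal.toReal hzA]
    exact log_norm_le_lambdaVec_zero A hz

lemma abs_lambdaVec_le [NeZero d] (A : (Matrix (Fin d) (Fin d) ℂ)ˣ) (i : Fin d) :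
    |lambdaVec A i| ≤ max (Real.log ‖A.val‖) (Real.log ‖A⁻¹.val‖) := by
  obtain ⟨z, hz, hzA⟩ := exists_mem_roots_lambdaVec_eq A i
  have hσ := mem_spectrum_of_mem_roots_charpoly hz
  have hz0 : 0 < ‖z‖ := norm_pos_iff.mpr fun h => spectrum.zero_notMem ℂ A.isUnit (h ▸ hσ)
  have hσinv : z⁻¹ ∈ spectrum ℂ A⁻¹.val := by
    rwa [← spectrum.inv₀_mem_iff, inv_inv]
  have h₁ := Real.log_le_log hz0 (spectrum.norm_le_norm_of_mem hσ)
  have h₂ := Real.log_le_log (by simpa using hz0) (spectrum.norm_le_norm_of_mem hσinv)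
  rw [norm_inv, Real.log_inv] at h₂
  rw [hzA, abs_le]
  exact ⟨neg_le.mp (h₂.trans (le_max_right _ _)), h₁.trans (le_max_left _ _)⟩

lemma firstCoord_kappaE [NeZero d] (g : (Matrix (Fin d) (Fin d) ℂ)ˣ) :
    firstCoord (kappaE g.val) = Real.log (opNormC g.val) := by
  have hg : ‖g.val‖ ≠ 0 := norm_ne_zero_iff.mpr g.ne_zero
  change (1 / 2 : ℝ) * lambdaVec (star g.val * g.val) 0 = Real.log ‖g.val‖
  rw [lambdaVec_zero_eq_log_norm (IsSelfAdjoint.star_mul_self g.val) (star g * g).isUnit,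
    CStarRing.norm_star_mul_self, Real.log_mul hg hg]
  ring

lemma isBounded_image_kappaE [NeZero d] {K : Set (Matrix (Fin d) (Fin d) ℂ)ˣ} (hK : IsCompact K) :
    IsBounded ((fun g => kappaE g.val) '' K) := by
  let c : (Matrix (Fin d) (Fin d) ℂ)ˣ → ℝ := fun g =>
    max (Real.log ‖(star g * g).val‖) (Real.log ‖(star g * g)⁻¹.val‖)
  have hc : Continuous c := by
    refine .max (.log (by fun_prop) fun g => ?_) (.log (by fun_prop) fun g => ?_) <;>
      exact norm_ne_zero_iff.mpr (Units.ne_zero _)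
  obtain ⟨C, hC⟩ := hK.exists_bound_of_continuousOn hc.continuousOn
  refine ((EuclideanSpace.equiv (Fin d) ℝ).symm.lipschitz.isBounded_image
    (IsBounded.pi fun _ => Metric.isBounded_Icc (-C) C)).subset ?_
  rintro _ ⟨g, hg, rfl⟩
  refine ⟨fun i => (1 / 2 : ℝ) * lambdaVec (g.valᴴ * g.val) i, fun i _ => ?_, rfl⟩
  have hbound : |lambdaVec (g.valᴴ * g.val) i| ≤ C :=
    (abs_lambdaVec_le (star g * g) i).trans ((le_abs_self (c g)).trans (hC g hg))
  constructor <;> linarith [abs_le.mp hbound]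

lemma lipschitzWith_firstCoord [NeZero d] : LipschitzWith 1 (firstCoord (d := d)) :=
  .of_dist_le_mul fun x y => by
    rw [NNReal.coe_one, one_mul]
    exact PiLp.dist_apply_le x y 0

lemma setOf_rpow_opNormC_eq [NeZero d] (T : Set (Matrix (Fin d) (Fin d) ℂ)ˣ) (t : ℝ) :
    {x : ℝ | ∃ g ∈ T, x = opNormC g.val ^ t} =
      Real.exp '' (firstCoord '' ((fun g => t • kappaE g.val) '' T)) := by
  ext x
  simp only [Set.mem_ofPred_eq, Set.image_image]
  refine exists_congr fun g => and_congr_right fun _ => ?_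
  change _ ↔ Real.exp (t * firstCoord (kappaE g.val)) = x
  have hg : 0 < opNormC g.val := (norm_pos_iff.mpr g.ne_zero : 0 < ‖g.val‖)
  rw [firstCoord_kappaE, Real.rpow_def_of_pos hg, mul_comm, eq_comm]
end Cartan

/-- For a compact `S ⊂ GL_d(ℂ)` whose normalized Cartan projections `κ(Sⁿ)/n` converge in the
Hausdorff metric to the joint spectrum `J(S)`, the joint spectral radius
`R(S) = lim_n sup_{g ∈ Sⁿ} ‖g‖^{1/n}` satisfies `log R(S) = max {x₁ : x ∈ J(S)}` and the lower
joint spectral radius satisfies `log R_sub(S) = min {x₁ : x ∈ J(S)}`. -/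
theorem jsr_from_joint_spectrum {d : ℕ} [NeZero d]
    (S : Set (Matrix (Fin d) (Fin d) ℂ)ˣ) (hS : IsCompact S) (hSne : S.Nonempty)
    (J : Set (EuclideanSpace ℝ (Fin d))) (hJc : IsCompact J) (hJne : J.Nonempty)
    (hJ : Filter.Tendsto (fun n : ℕ =>
        Metric.hausdorffDist ((fun g : (Matrix (Fin d) (Fin d) ℂ)ˣ =>
          (n : ℝ)⁻¹ • kappaE g.val) '' (S ^ n)) J)
      Filter.atTop (nhds 0))
    (R Rsub : ℝ)
    (hR : Filter.Tendsto (fun n : ℕ =>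
        sSup {x : ℝ | ∃ g ∈ S ^ n, x = opNormC g.val ^ ((n : ℝ)⁻¹)})
      Filter.atTop (nhds R))
    (hRsub : Filter.Tendsto (fun n : ℕ =>
        sInf {x : ℝ | ∃ g ∈ S ^ n, x = opNormC g.val ^ ((n : ℝ)⁻¹)})
      Filter.atTop (nhds Rsub)) :
    Real.log R = sSup (firstCoord '' J) ∧ Real.log Rsub = sInf (firstCoord '' J) := by
  set P : ℕ → Set (EuclideanSpace ℝ (Fin d)) := fun n =>
    (fun g : (Matrix (Fin d) (Fin d) ℂ)ˣ => (n : ℝ)⁻¹ • kappaE g.val) '' (S ^ n)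
  have hP : ∀ n, (P n).Nonempty := fun n => hSne.pow.image _
  have hP' : ∀ n, IsBounded (P n) := fun n => by
    simpa only [Set.image_image] using
      (lipschitzWith_smul (n : ℝ)⁻¹).isBounded_image (isBounded_image_kappaE (hS.pow n))
  have hP₁ : ∀ n, IsBounded (firstCoord '' P n) := fun n =>
    lipschitzWith_firstCoord.isBounded_image (hP' n)
  have hsup := tendsto_csSup_image_of_tendsto_hausdorffDist lipschitzWith_firstCoord
    hP hP' hJne hJc.isBounded hJ
  have hinf := tendsto_csInf_image_of_tendsto_hausdorffDist lipschitzWith_firstCoord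
    hP hP' hJne hJc.isBounded hJ
  simp only [setOf_rpow_opNormC_eq] at hR hRsub
  constructor
  · have hR' := hR.congr fun n => Real.csSup_image_exp ((hP n).image _) (hP₁ n).bddAbove
    rw [tendsto_nhds_unique hR' ((Real.continuous_exp.tendsto _).comp hsup), Real.log_exp]
  · have hRsub' := hRsub.congr fun n => Real.csInf_image_exp ((hP n).image _) (hP₁ n).bddBelow
    rw [tendsto_nhds_unique hRsub' ((Real.continuous_exp.tendsto _).comp hinf), Real.log_exp]
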